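/- The 6-vertex graph with vertex set {1,2,3,4,5,6} and edge set {{1,2},{1,3},{2,3},{2,4},{3,4},{1,5},{5,6},{6,4}} (that is, K_4 minus the edge {1,4} on vertices {1,2,3,4}, together with the path 1–5–6–4 joining the two nonadjacent vertices) is minimally unlabellable: it is not labellable, but every proper induced subgraph of it is labellable. -/

import Mathlib

/-- `H` is labellable: for some positive integer `k` the vertices of `H` can be
injectively labelled by `k`-element subsets of `ℕ` so that two distinct vertices
are adjacent if and only if their labels intersect in a set of size `k - 1`. -/
def Labellable {V : Type*} (H : SimpleGraph V) : Prop :=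
  ∃ k : ℕ, 0 < k ∧ ∃ ℓ : V → Finset ℕ, Function.Injective ℓ ∧
    (∀ v, (ℓ v).card = k) ∧
    ∀ u v : V, u ≠ v → (H.Adj u v ↔ (ℓ u ∩ ℓ v).card = k - 1)

/-- The 6-vertex graph with vertex set `{1,…,6}` (vertex `i` is encoded as
`i - 1 : Fin 6`) and edge set
`{{1,2},{1,3},{2,3},{2,4},{3,4},{1,5},{5,6},{6,4}}`: `K₄` minus the edge
`{1,4}` on `{1,2,3,4}`, together with the path `1-5-6-4`. -/
def K4minusEdgePlusPath : SimpleGraph (Fin 6) :=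
  SimpleGraph.fromRel (fun a b =>
    (a.val + 1, b.val + 1) ∈
      [(1, 2), (1, 3), (2, 3), (2, 4), (3, 4), (1, 5), (5, 6), (6, 4)])

/-!
Label the graph by `k`-sets and write `B, C` for the labels of the adjacent vertices `2, 3`
(`ℓ 1, ℓ 2` below). Since `|B ∩ C| = k - 1`, a common neighbour of `B` and `C` either contains
`B ∩ C` or lies in `B ∪ C`, a set of size `k + 1`; two common neighbours of the same kind meet in
at least `k - 1` elements, so they are adjacent. Hence, up to the symmetry `1 ↔ 4, 5 ↔ 6`, the
label of `1` contains `B ∩ C` and the label of `4` lies in `B ∪ C`. Let `B \ C = {b}` and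
`C \ B = {c}`. The label of `5` avoids `b` and `c` (otherwise it would meet `B` or `C` in `k - 1`
elements), while the label of `6` contains both (otherwise its `k - 1` common elements with the
label of `4` would all lie in `B` or in `C`). So the labels of `5` and `6` share at most `k - 2`
elements, although `5 ~ 6`. Deleting any vertex leaves a graph with an explicit labelling.
-/

open Finset SimpleGraph

structure IsLabelling {V : Type*} (H : SimpleGraph V) (k : ℕ) (ℓ : V → Finset ℕ) : Prop where
  injective : Function.Injective ℓ
  card_eq : ∀ v, (ℓ v).card = k
  adj_iff : ∀ u v, u ≠ v → (H.Adj u v ↔ (ℓ u ∩ ℓ v).card = k - 1)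

theorem labellable_iff {V : Type*} {H : SimpleGraph V} :
    Labellable H ↔ ∃ k, 0 < k ∧ ∃ ℓ, IsLabelling H k ℓ :=
  exists_congr fun _ => and_congr_right fun _ => exists_congr fun _ =>
    ⟨fun ⟨h₁, h₂, h₃⟩ => ⟨h₁, h₂, h₃⟩, fun ⟨h₁, h₂, h₃⟩ => ⟨h₁, h₂, h₃⟩⟩

namespace Finset

variable {α : Type*} [DecidableEq α]

theorem card_inter_lt_of_card_eq_of_ne {X Y : Finset α} (h : X.card = Y.card) (hne : X ≠ Y) :
    (X ∩ Y).card < X.card := by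
  refine card_lt_card (ssubset_iff_subset_ne.mpr ⟨inter_subset_left, fun hXY => hne ?_⟩)
  exact eq_of_subset_of_card_le (inter_eq_left.mp hXY) h.ge

theorem inter_subset_or_subset_union {k : ℕ} {B C X : Finset α} (hB : B.card = k)
    (hC : C.card = k) (hX : X.card = k) (hBC : (B ∩ C).card = k - 1)
    (hXB : (X ∩ B).card = k - 1) (hXC : (X ∩ C).card = k - 1) : B ∩ C ⊆ X ∨ X ⊆ B ∪ C := by
  refine or_iff_not_imp_left.mpr fun h => ?_
  obtain ⟨s, hs, hsX⟩ := not_subset.mp h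
  have erase_subset_of {Y : Finset α} (hsY : s ∈ Y) (hY : Y.card = k)
      (hXY : (X ∩ Y).card = k - 1) : Y.erase s ⊆ X := by
    have hsub : X ∩ Y ⊆ Y.erase s := fun x hx =>
      mem_erase.mpr ⟨fun hxs => hsX (hxs ▸ (mem_inter.mp hx).1), (mem_inter.mp hx).2⟩
    rw [← eq_of_subset_of_card_le hsub (by rw [card_erase_of_mem hsY, hY, hXY])]
    exact inter_subset_left
  have hU : ((B ∪ C).erase s).card = k := by
    have := card_union_add_card_inter B C
    have := card_pos.mpr ⟨s, hs⟩
    rw [card_erase_of_mem (mem_union_left C (mem_inter.mp hs).1)]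
    omega
  have hsub : (B ∪ C).erase s ⊆ X := by
    rw [erase_union_distrib]
    exact union_subset (erase_subset_of (mem_inter.mp hs).1 hB hXB)
      (erase_subset_of (mem_inter.mp hs).2 hC hXC)
  rw [← eq_of_subset_of_card_le hsub (by rw [hX, hU])]
  exact erase_subset s _

theorem card_inter_le_card_inter_of_mem {S A B E : Finset α} {b : α} (hSA : S ⊆ A)
    (hSB : S ⊆ B) (hA : A.card ≤ S.card + 1) (hbE : b ∈ E) (hbB : b ∈ B) (hbS : b ∉ S) :
    (E ∩ A).card ≤ (E ∩ B).card := by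
  have hAS : (A \ S).card ≤ 1 := by rw [card_sdiff_of_subset hSA]; omega
  have hEA : E ∩ A ⊆ E ∩ S ∪ A \ S := fun x hx => by
    by_cases hxS : x ∈ S
    · exact mem_union_left _ (mem_inter.mpr ⟨(mem_inter.mp hx).1, hxS⟩)
    · exact mem_union_right _ (mem_sdiff.mpr ⟨(mem_inter.mp hx).2, hxS⟩)
  calc (E ∩ A).card ≤ (E ∩ S).card + 1 := (card_le_card hEA).trans (by grw [card_union_le, hAS])
    _ = (insert b (E ∩ S)).card := (card_insert_of_notMem fun h => hbS (mem_inter.mp h).2).symm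
    _ ≤ (E ∩ B).card :=
      card_le_card (insert_subset (mem_inter.mpr ⟨hbE, hbB⟩) (inter_subset_inter_left hSB))

theorem inter_subset_inter_of_subset_union {B C D F : Finset α} {b : α} (hD : D ⊆ B ∪ C)
    (hb : B \ C = {b}) (hbF : b ∉ F) : F ∩ D ⊆ F ∩ C := fun x hx => by
  rw [mem_inter] at hx ⊢
  refine ⟨hx.1, by_contra fun hxC => hbF ?_⟩
  have hxb : x ∈ B \ C := mem_sdiff.mpr ⟨(mem_union.mp (hD hx.2)).resolve_right hxC, hxC⟩
  rw [hb, mem_singleton] at hxb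
  exact hxb ▸ hx.1

end Finset

namespace IsLabelling

variable {V W : Type*} {G : SimpleGraph V} {H : SimpleGraph W} {k : ℕ} {ℓ : W → Finset ℕ}

theorem comp_embedding (hℓ : IsLabelling H k ℓ) (f : G ↪g H) : IsLabelling G k (ℓ ∘ f) where
  injective := hℓ.injective.comp f.injective
  card_eq v := hℓ.card_eq (f v)
  adj_iff _ _ huv := f.map_adj_iff.symm.trans (hℓ.adj_iff _ _ (f.injective.ne huv))

theorem card_inter_of_adj (hℓ : IsLabelling H k ℓ) {u v : W} (h : H.Adj u v) :
    (ℓ u ∩ ℓ v).card = k - 1 :=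
  (hℓ.adj_iff u v h.ne).mp h

theorem card_inter_lt_of_not_adj (hℓ : IsLabelling H k ℓ) {u v : W} (huv : u ≠ v)
    (h : ¬ H.Adj u v) : (ℓ u ∩ ℓ v).card < k - 1 := by
  have hne : (ℓ u ∩ ℓ v).card ≠ k - 1 := mt (hℓ.adj_iff u v huv).mpr h
  have hlt := card_inter_lt_of_card_eq_of_ne ((hℓ.card_eq u).trans (hℓ.card_eq v).symm)
    (hℓ.injective.ne huv)
  rw [hℓ.card_eq] at hlt
  omega

end IsLabelling

theorem Labellable.of_embedding {V W : Type*} {G : SimpleGraph V} {H : SimpleGraph W}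
    (h : Labellable H) (f : G ↪g H) : Labellable G := by
  obtain ⟨k, hk, ℓ, hℓ⟩ := labellable_iff.mp h
  exact labellable_iff.mpr ⟨k, hk, _, hℓ.comp_embedding f⟩

theorem labellable_induce_compl_singleton {V : Type*} {G : SimpleGraph V} {i : V} {k : ℕ}
    (hk : 0 < k) (ℓ : V → Finset ℕ) (hcard : ∀ v ≠ i, (ℓ v).card = k)
    (hadj : ∀ u ≠ i, ∀ v ≠ i, u ≠ v → ℓ u ≠ ℓ v ∧ (G.Adj u v ↔ (ℓ u ∩ ℓ v).card = k - 1)) :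
    Labellable (G.induce {i}ᶜ) :=
  labellable_iff.mpr ⟨k, hk, fun v => ℓ v,
    { injective := fun u v huv => Subtype.ext <| by_contra fun hne => (hadj u u.2 v v.2 hne).1 huv
      card_eq := fun v => hcard v v.2
      adj_iff := fun u v huv => (hadj u u.2 v v.2 (Subtype.coe_ne_coe.mpr huv)).2 }⟩

instance : DecidableRel K4minusEdgePlusPath.Adj := fun a b =>
  inferInstanceAs (Decidable (a ≠ b ∧ (_ ∨ _)))

def K4minusEdgePlusPath.swapOneTwo : K4minusEdgePlusPath ≃g K4minusEdgePlusPath :=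
  ⟨Equiv.swap 1 2, by decide⟩

def K4minusEdgePlusPath.reflect : K4minusEdgePlusPath ≃g K4minusEdgePlusPath :=
  ⟨Equiv.swap 0 3 * Equiv.swap 4 5, by decide⟩

namespace IsLabelling

variable {k : ℕ} {ℓ : Fin 6 → Finset ℕ}

theorem notMem_and_mem_of_sdiff_eq (hℓ : IsLabelling K4minusEdgePlusPath k ℓ)
    (hA : ℓ 1 ∩ ℓ 2 ⊆ ℓ 0) (hD : ℓ 3 ⊆ ℓ 1 ∪ ℓ 2) {b : ℕ} (hb : ℓ 1 \ ℓ 2 = {b}) :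
    b ∉ ℓ 4 ∧ b ∈ ℓ 5 := by
  obtain ⟨hbB, hbC⟩ := mem_sdiff.mp (hb ▸ mem_singleton_self b)
  constructor
  · intro hbE
    have hBC := hℓ.card_inter_of_adj (by decide : K4minusEdgePlusPath.Adj 1 2)
    have hk : 0 < k := hℓ.card_eq 1 ▸ card_pos.mpr ⟨b, hbB⟩
    have := card_inter_le_card_inter_of_mem hA inter_subset_left
      (by rw [hℓ.card_eq, hBC]; omega) hbE hbB fun h => hbC (mem_inter.mp h).2
    have := hℓ.card_inter_of_adj (by decide : K4minusEdgePlusPath.Adj 4 0)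
    have := hℓ.card_inter_lt_of_not_adj (by decide : (4 : Fin 6) ≠ 1) (by decide)
    omega
  · by_contra hbF
    have := card_le_card (inter_subset_inter_of_subset_union hD hb hbF)
    have := hℓ.card_inter_of_adj (by decide : K4minusEdgePlusPath.Adj 5 3)
    have := hℓ.card_inter_lt_of_not_adj (by decide : (5 : Fin 6) ≠ 2) (by decide)
    omega

theorem false_of_inter_subset_of_subset_union (hℓ : IsLabelling K4minusEdgePlusPath k ℓ)
    (hk : 0 < k) (hA : ℓ 1 ∩ ℓ 2 ⊆ ℓ 0) (hD : ℓ 3 ⊆ ℓ 1 ∪ ℓ 2) : False := by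
  have hBC := hℓ.card_inter_of_adj (by decide : K4minusEdgePlusPath.Adj 1 2)
  have hB := hℓ.card_eq 1
  have hC := hℓ.card_eq 2
  obtain ⟨b, hb⟩ := card_eq_one.mp
    (show (ℓ 1 \ ℓ 2).card = 1 by rw [card_sdiff, inter_comm]; omega)
  obtain ⟨c, hc⟩ := card_eq_one.mp (show (ℓ 2 \ ℓ 1).card = 1 by rw [card_sdiff]; omega)
  obtain ⟨hbE, hbF⟩ := hℓ.notMem_and_mem_of_sdiff_eq hA hD hb
  obtain ⟨hcE, hcF⟩ : c ∉ ℓ 4 ∧ c ∈ ℓ 5 :=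
    (hℓ.comp_embedding K4minusEdgePlusPath.swapOneTwo.toEmbedding).notMem_and_mem_of_sdiff_eq
      (inter_comm (ℓ 2) _ ▸ hA) (union_comm (ℓ 2) _ ▸ hD) hc
  have hbc : b ≠ c := fun h => (mem_sdiff.mp (hc ▸ mem_singleton_self c)).2
    (h ▸ (mem_sdiff.mp (hb ▸ mem_singleton_self b)).1)
  have hbcF : {b, c} ⊆ ℓ 5 := insert_subset hbF (singleton_subset_iff.mpr hcF)
  have hEF : ℓ 4 ∩ ℓ 5 ⊆ ℓ 5 \ {b, c} := fun x hx => by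
    rw [mem_inter] at hx
    refine mem_sdiff.mpr ⟨hx.2, fun hxbc => ?_⟩
    rcases mem_insert.mp hxbc with rfl | hxc
    · exact hbE hx.1
    · exact hcE (mem_singleton.mp hxc ▸ hx.1)
  have h2k : 2 ≤ k := hℓ.card_eq 5 ▸ card_pair hbc ▸ card_le_card hbcF
  have hle : (ℓ 4 ∩ ℓ 5).card ≤ k - 2 := by
    simpa only [card_sdiff_of_subset hbcF, card_pair hbc, hℓ.card_eq] using card_le_card hEF
  have := hℓ.card_inter_of_adj (by decide : K4minusEdgePlusPath.Adj 4 5)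
  omega

end IsLabelling

theorem K4minusEdgePlusPath_not_labellable : ¬ Labellable K4minusEdgePlusPath := by
  intro h
  obtain ⟨k, hk, ℓ, hℓ⟩ := labellable_iff.mp h
  have hBC := hℓ.card_inter_of_adj (by decide : K4minusEdgePlusPath.Adj 1 2)
  have hAD := hℓ.card_inter_lt_of_not_adj (by decide : (0 : Fin 6) ≠ 3) (by decide)
  have common_nbr {v : Fin 6} (h₁ : K4minusEdgePlusPath.Adj v 1)
      (h₂ : K4minusEdgePlusPath.Adj v 2) : ℓ 1 ∩ ℓ 2 ⊆ ℓ v ∨ ℓ v ⊆ ℓ 1 ∪ ℓ 2 :=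
    inter_subset_or_subset_union (hℓ.card_eq 1) (hℓ.card_eq 2) (hℓ.card_eq v) hBC
      (hℓ.card_inter_of_adj h₁) (hℓ.card_inter_of_adj h₂)
  rcases common_nbr (v := 0) (by decide) (by decide) with hA | hA <;>
    rcases common_nbr (v := 3) (by decide) (by decide) with hD | hD
  · have := card_le_card (subset_inter hA hD)
    omega
  · exact hℓ.false_of_inter_subset_of_subset_union hk hA hD
  · exact (hℓ.comp_embedding K4minusEdgePlusPath.reflect.toEmbedding)
      |>.false_of_inter_subset_of_subset_union hk hD hA
  · have := card_le_card (union_subset hA hD)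
    have := card_union_add_card_inter (ℓ 0) (ℓ 3)
    have := card_union_add_card_inter (ℓ 1) (ℓ 2)
    have := hℓ.card_eq 0
    have := hℓ.card_eq 1
    have := hℓ.card_eq 2
    have := hℓ.card_eq 3
    omega

theorem K4minusEdgePlusPath_labellable_induce_compl_singleton (i : Fin 6) :
    Labellable (K4minusEdgePlusPath.induce {i}ᶜ) := by
  fin_cases i
  · exact labellable_induce_compl_singleton two_pos ![∅, {1, 2}, {1, 3}, {1, 4}, {5, 6}, {4, 5}]
      (by decide) (by decide)
  · exact labellable_induce_compl_singleton two_pos ![{1, 2}, ∅, {2, 3}, {3, 4}, {1, 5}, {4, 5}]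
      (by decide) (by decide)
  · exact labellable_induce_compl_singleton two_pos ![{1, 2}, {2, 3}, ∅, {3, 4}, {1, 5}, {4, 5}]
      (by decide) (by decide)
  · exact labellable_induce_compl_singleton two_pos ![{1, 2}, {1, 3}, {1, 4}, ∅, {2, 5}, {5, 6}]
      (by decide) (by decide)
  · exact labellable_induce_compl_singleton three_pos
      ![{0, 1, 2}, {0, 1, 3}, {0, 1, 4}, {0, 3, 4}, ∅, {3, 4, 5}] (by decide) (by decide)
  · exact labellable_induce_compl_singleton three_pos
      ![{0, 3, 4}, {0, 1, 3}, {0, 1, 4}, {0, 1, 2}, {3, 4, 5}, ∅] (by decide) (by decide)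

/-- This 6-vertex graph is minimally unlabellable: it is not labellable, but
every proper induced subgraph of it is labellable. -/
theorem K4minusEdgePlusPath_minimally_unlabellable :
    ¬ Labellable K4minusEdgePlusPath ∧
      ∀ s : Set (Fin 6), s ≠ Set.univ →
        Labellable (K4minusEdgePlusPath.induce s) := by
  refine ⟨K4minusEdgePlusPath_not_labellable, fun s hs => ?_⟩
  obtain ⟨i, hi⟩ := (Set.ne_univ_iff_exists_notMem s).mp hs
  exact (K4minusEdgePlusPath_labellable_induce_compl_singleton i).of_embedding
    (induceHomOfLE _ (Set.subset_compl_singleton_iff.mpr hi))
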